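/- For every real ξ, one has ∫_ℝ e^{−i x ξ} ( 240 sech³(x) − 3720 sech⁵(x) + 9960 sech⁷(x) − 6720 sech⁹(x) ) dx = (π/6) (1 − ξ²) ξ² (1 + ξ²)² sech(π ξ / 2). In particular, this Fourier transform vanishes at ξ = 1 and ξ = −1. -/

import Mathlib

open MeasureTheory Real

noncomputable def sech (x : ℝ) : ℝ := (Real.cosh x)⁻¹

/-!
Write `Ŝₙ(ξ) = ∫ e^{-ixξ} sechⁿ x dx`. Substituting `t = σ(2x)` (σ the logistic sigmoid) turns the
Beta integral `B((1 - iξ)/2, (1 + iξ)/2)` into `Ŝ₁(ξ)`, and Euler's reflection formula evaluates it: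
`Ŝ₁(ξ) = π / sin(π(1 - iξ)/2) = π sech(πξ/2)`. Since
`(sechⁿ)'' = n² sechⁿ - n(n+1) sechⁿ⁺²` and the transform turns `d²/dx²` into `-ξ²`, one gets
`n(n+1) Ŝₙ₊₂ = (n² + ξ²) Ŝₙ`, so every odd `Ŝ₂ₖ₊₁` is a polynomial multiple of `Ŝ₁`; the given
combination of `Ŝ₃, …, Ŝ₉` collapses to `(π/6)(1 - ξ²) ξ² (1 + ξ²)² sech(πξ/2)`.
-/

lemma sech_pos (x : ℝ) : 0 < sech x := inv_pos.mpr (cosh_pos x)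

lemma cosh_mul_sech (x : ℝ) : cosh x * sech x = 1 := mul_inv_cancel₀ (cosh_pos x).ne'

lemma continuous_sech : Continuous sech := continuous_cosh.inv₀ fun x => (cosh_pos x).ne'

lemma sech_le_one (x : ℝ) : sech x ≤ 1 := inv_le_one_of_one_le₀ (one_le_cosh x)

lemma sech_le_four_mul_inv_one_add_sq (x : ℝ) : sech x ≤ 4 * (1 + x ^ 2)⁻¹ := by
  have hcosh : (1 + x ^ 2) / 4 ≤ cosh x := by
    have hexp := quadratic_le_exp_of_nonneg (abs_nonneg x)
    rw [← cosh_abs, cosh_eq]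
    nlinarith [Real.exp_pos (-|x|), abs_nonneg x, sq_abs x]
  rw [sech, ← div_eq_mul_inv, ← inv_div]
  exact inv_anti₀ (by positivity) hcosh

lemma integrable_sech_pow {n : ℕ} (hn : n ≠ 0) : Integrable fun x => sech x ^ n := by
  refine ((integrable_inv_one_add_sq.const_mul 4).mono' (continuous_sech.pow n).aestronglyMeasurable
    (.of_forall fun x => ?_))
  rw [norm_of_nonneg (pow_nonneg (sech_pos x).le n)]
  calc sech x ^ n ≤ sech x := pow_le_of_le_one (sech_pos x).le (sech_le_one x) hn
    _ ≤ 4 * (1 + x ^ 2)⁻¹ := sech_le_four_mul_inv_one_add_sq x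

lemma hasDerivAt_sech (x : ℝ) : HasDerivAt sech (-(sinh x * sech x ^ 2)) x :=
  ((hasDerivAt_cosh x).inv (cosh_pos x).ne').congr_deriv (by rw [sech]; field_simp)

lemma hasDerivAt_sech_pow (n : ℕ) (x : ℝ) :
    HasDerivAt (fun x => sech x ^ n) (-n * (sinh x * sech x ^ (n + 1))) x := by
  refine ((hasDerivAt_sech x).pow n).congr_deriv ?_
  rcases n with _ | n
  · simp
  · push_cast; ring

lemma hasDerivAt_sinh_mul_sech_pow (n : ℕ) (x : ℝ) :
    HasDerivAt (fun x => sinh x * sech x ^ (n + 1))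
      ((n + 1) * sech x ^ (n + 2) - n * sech x ^ n) x := by
  refine ((hasDerivAt_sinh x).mul (hasDerivAt_sech_pow (n + 1) x)).congr_deriv ?_
  have hsinh : sinh x ^ 2 = cosh x ^ 2 - 1 := by linarith [cosh_sq_sub_sinh_sq x]
  push_cast
  linear_combination (-(n + 1) * sech x ^ (n + 2)) * hsinh -
    ((n + 1) * sech x ^ n * (cosh x * sech x + 1) - sech x ^ n) * cosh_mul_sech x

lemma integrable_sinh_mul_sech_pow {n : ℕ} (hn : n ≠ 0) :
    Integrable fun x => sinh x * sech x ^ (n + 1) := by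
  refine (integrable_sech_pow hn).mono'
    (continuous_sinh.mul (continuous_sech.pow _)).aestronglyMeasurable (.of_forall fun x => ?_)
  have habs : |sinh x| ≤ cosh x := by
    nlinarith [cosh_sq_sub_sinh_sq x, cosh_pos x, sq_abs (sinh x), abs_nonneg (sinh x)]
  calc ‖sinh x * sech x ^ (n + 1)‖ = |sinh x| * sech x ^ (n + 1) := by
        rw [norm_mul, norm_of_nonneg (pow_nonneg (sech_pos x).le _), norm_eq_abs]
    _ ≤ cosh x * sech x ^ (n + 1) :=
        mul_le_mul_of_nonneg_right habs (pow_nonneg (sech_pos x).le _)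
    _ = sech x ^ n := by rw [pow_succ, mul_left_comm, cosh_mul_sech, mul_one]

open scoped Complex FourierTransform
open Complex (I)

lemma integral_exp_neg_I_mul_eq_fourier (f : ℝ → ℂ) (ξ : ℝ) :
    ∫ x : ℝ, cexp (-I * x * ξ) * f x = 𝓕 f (ξ / (2 * π)) := by
  rw [Real.fourier_real_eq_integral_exp_smul]
  congr 1 with x
  rw [smul_eq_mul]
  congr 2
  push_cast
  field_simp

lemma integral_exp_neg_I_mul_of_hasDerivAt {f f' : ℝ → ℂ} (hf : ∀ x, HasDerivAt f (f' x) x)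
    (hf_int : Integrable f) (hf'_int : Integrable f') (ξ : ℝ) :
    ∫ x : ℝ, cexp (-I * x * ξ) * f' x = I * ξ * ∫ x : ℝ, cexp (-I * x * ξ) * f x := by
  have hderiv : deriv f = f' := funext fun x => (hf x).deriv
  have hfourier := Real.fourier_deriv hf_int (fun x => (hf x).differentiableAt)
    (hderiv ▸ hf'_int)
  rw [hderiv] at hfourier
  rw [integral_exp_neg_I_mul_eq_fourier, integral_exp_neg_I_mul_eq_fourier, hfourier]
  dsimp only
  rw [smul_eq_mul]
  congr 1
  push_cast
  field_simp

lemma Integrable.exp_neg_I_mul {f : ℝ → ℂ} (hf : Integrable f) (ξ : ℝ) :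
    Integrable fun x : ℝ => cexp (-I * x * ξ) * f x :=
  hf.bdd_mul (c := 1) (by fun_prop) (.of_forall fun x => by
    rw [Complex.norm_exp]; simp)

open Complex in
lemma sigmoid_cpow_mul_sigmoid_neg_cpow (u v : ℂ) (s : ℝ) :
    (sigmoid s : ℂ) ^ u * (sigmoid (-s) : ℂ) ^ v
      = cexp (u * s) * (sigmoid (-s) : ℂ) ^ (u + v) := by
  have hσ : sigmoid s = Real.exp s * sigmoid (-s) := by
    rw [← sigmoid_mul_rexp_neg, mul_left_comm, ← Real.exp_add]; simp
  have hexp : ((Real.exp s : ℝ) : ℂ) ^ u = cexp (u * s) := by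
    rw [cpow_def_of_ne_zero (by exact_mod_cast (Real.exp_pos s).ne'),
      ← ofReal_log (Real.exp_pos s).le, Real.log_exp, mul_comm]
  rw [hσ, ofReal_mul, mul_cpow_ofReal_nonneg (Real.exp_pos s).le (sigmoid_nonneg _), hexp,
    mul_assoc, ← cpow_add _ _ (by exact_mod_cast (sigmoid_pos _).ne')]

open Complex in
lemma betaIntegral_eq_integral_sigmoid (u v : ℂ) :
    betaIntegral u v = ∫ s : ℝ, (sigmoid s : ℂ) ^ u * (sigmoid (-s) : ℂ) ^ v := by
  rw [betaIntegral, intervalIntegral.integral_of_le zero_le_one, integral_Ioc_eq_integral_Ioo,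
    ← range_sigmoid, ← Set.image_univ,
    integral_image_eq_integral_abs_deriv_smul MeasurableSet.univ
      (fun s _ => (hasDerivAt_sigmoid s).hasDerivWithinAt) sigmoid_injective.injOn,
    Measure.restrict_univ]
  congr 1 with s
  have h0 : (sigmoid s : ℂ) ≠ 0 := by exact_mod_cast (sigmoid_pos s).ne'
  have h1 : (sigmoid (-s) : ℂ) ≠ 0 := by exact_mod_cast (sigmoid_pos _).ne'
  have hneg : (1 : ℂ) - sigmoid s = sigmoid (-s) := by rw [sigmoid_neg]; push_cast; ring
  rw [← sigmoid_neg, abs_of_pos (mul_pos (sigmoid_pos s) (sigmoid_pos _)), Complex.real_smul,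
    hneg, cpow_sub _ _ h0, cpow_sub _ _ h1, cpow_one, cpow_one]
  push_cast
  field_simp

lemma sigmoid_neg_two_mul (x : ℝ) : sigmoid (-(2 * x)) = Real.exp (-x) * sech x / 2 := by
  rw [sigmoid_def, neg_neg, sech, Real.cosh_eq, Real.exp_neg,
    show 2 * x = x + x by ring, Real.exp_add]
  field_simp
  ring

noncomputable def sechPowFourier (n : ℕ) (ξ : ℝ) : ℂ :=
  ∫ x : ℝ, cexp (-I * x * ξ) * ((sech x ^ n : ℝ) : ℂ)

open Complex in
lemma betaIntegral_eq_sechPowFourier_one (ξ : ℝ) :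
    betaIntegral ((1 - I * ξ) / 2) ((1 + I * ξ) / 2) = sechPowFourier 1 ξ := by
  set u : ℂ := (1 - I * ξ) / 2 with hu
  have huv : u + (1 + I * ξ) / 2 = 1 := by rw [hu]; ring
  have hscale := Measure.integral_comp_mul_left
    (fun s : ℝ => cexp (u * s) * (sigmoid (-s) : ℂ)) 2
  norm_num at hscale
  calc betaIntegral u ((1 + I * ξ) / 2) = ∫ s : ℝ, cexp (u * s) * (sigmoid (-s) : ℂ) := by
        simp_rw [betaIntegral_eq_integral_sigmoid, sigmoid_cpow_mul_sigmoid_neg_cpow, huv,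
          cpow_one]
    _ = ∫ x : ℝ, 2 * (cexp (u * (2 * x)) * (sigmoid (-(2 * x)) : ℂ)) := by
        rw [integral_const_mul, hscale]; ring
    _ = sechPowFourier 1 ξ := by
        congr 1 with x
        rw [sigmoid_neg_two_mul, hu, pow_one]; push_cast
        rw [show -I * x * ξ = (1 - I * ξ) / 2 * (2 * x) + -x by ring, Complex.exp_add]
        ring

open Complex in
lemma sechPowFourier_one (ξ : ℝ) : sechPowFourier 1 ξ = ((π * sech (π * ξ / 2) : ℝ) : ℂ) := by
  set u : ℂ := (1 - I * ξ) / 2 with hu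
  have hsin : Complex.sin (π * u) = Real.cosh (π * ξ / 2) := by
    rw [show (π : ℂ) * u = π / 2 - ((π * ξ / 2 : ℝ) : ℂ) * I by rw [hu]; push_cast; ring,
      Complex.sin_pi_div_two_sub, Complex.cos_mul_I, Complex.ofReal_cosh]
  have hΓ := Gamma_mul_Gamma_eq_betaIntegral (s := u) (t := 1 - u)
    (by simp [hu]) (by norm_num [hu])
  rw [add_sub_cancel, Complex.Gamma_one, one_mul, Complex.Gamma_mul_Gamma_one_sub, hsin,
    show 1 - u = (1 + I * ξ) / 2 by rw [hu]; ring, betaIntegral_eq_sechPowFourier_one] at hΓ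
  rw [← hΓ, sech]
  push_cast
  rfl

lemma integrable_exp_neg_I_mul_sech_pow {n : ℕ} (hn : n ≠ 0) (ξ : ℝ) :
    Integrable fun x : ℝ => cexp (-I * x * ξ) * ((sech x ^ n : ℝ) : ℂ) :=
  Integrable.exp_neg_I_mul (integrable_sech_pow hn).ofReal ξ

lemma sechPowFourier_add_two {n : ℕ} (hn : n ≠ 0) (ξ : ℝ) :
    sechPowFourier (n + 2) ξ = (n ^ 2 + ξ ^ 2) / (n * (n + 1)) * sechPowFourier n ξ := by
  set f' : ℝ → ℂ := fun x => ((-n * (sinh x * sech x ^ (n + 1)) : ℝ) : ℂ)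
  set f'' : ℝ → ℂ := fun x =>
    n ^ 2 * ((sech x ^ n : ℝ) : ℂ) - n * (n + 1) * ((sech x ^ (n + 2) : ℝ) : ℂ)
  have hf' : ∀ x, HasDerivAt f' (f'' x) x := fun x =>
    (((hasDerivAt_sinh_mul_sech_pow n x).const_mul (-n : ℝ)).ofReal_comp).congr_deriv
      (by simp only [f'']; push_cast; ring)
  have hf'_int : Integrable f' := ((integrable_sinh_mul_sech_pow hn).const_mul (-n : ℝ)).ofReal
  have hf''_int : Integrable f'' := ((integrable_sech_pow hn).ofReal.const_mul _).sub
    ((integrable_sech_pow (n := n + 2) (by omega)).ofReal.const_mul _)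
  have hfourier₁ : ∫ x : ℝ, cexp (-I * x * ξ) * f' x = I * ξ * sechPowFourier n ξ :=
    integral_exp_neg_I_mul_of_hasDerivAt (fun x => (hasDerivAt_sech_pow n x).ofReal_comp)
      (integrable_sech_pow hn).ofReal hf'_int ξ
  have hfourier₂ := integral_exp_neg_I_mul_of_hasDerivAt hf' hf'_int hf''_int ξ
  have hsplit : ∫ x : ℝ, cexp (-I * x * ξ) * f'' x
      = n ^ 2 * sechPowFourier n ξ - n * (n + 1) * sechPowFourier (n + 2) ξ := by
    simp only [f'', mul_sub, mul_left_comm (cexp _)]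
    rw [integral_sub, integral_const_mul, integral_const_mul]
    · rfl
    · exact (integrable_exp_neg_I_mul_sech_pow hn ξ).const_mul _
    · exact (integrable_exp_neg_I_mul_sech_pow (n := n + 2) (by omega) ξ).const_mul _
  have hn' : (n : ℂ) * (n + 1) ≠ 0 := by norm_cast; positivity
  rw [div_mul_eq_mul_div, eq_div_iff hn']
  linear_combination
    hsplit - hfourier₂ - I * ξ * hfourier₁ - ξ ^ 2 * sechPowFourier n ξ * Complex.I_sq

lemma integral_exp_neg_I_mul_sech_combination_eq_sechPowFourier (ξ : ℝ) :
    ∫ x : ℝ, cexp (-I * x * ξ) * ((240 * sech x ^ 3 - 3720 * sech x ^ 5 + 9960 * sech x ^ 7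
        - 6720 * sech x ^ 9 : ℝ) : ℂ)
      = 240 * sechPowFourier 3 ξ - 3720 * sechPowFourier 5 ξ + 9960 * sechPowFourier 7 ξ
        - 6720 * sechPowFourier 9 ξ := by
  have i3 := (integrable_exp_neg_I_mul_sech_pow (n := 3) (by norm_num) ξ).const_mul 240
  have i5 := (integrable_exp_neg_I_mul_sech_pow (n := 5) (by norm_num) ξ).const_mul 3720
  have i7 := (integrable_exp_neg_I_mul_sech_pow (n := 7) (by norm_num) ξ).const_mul 9960
  have i9 := (integrable_exp_neg_I_mul_sech_pow (n := 9) (by norm_num) ξ).const_mul 6720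
  simp only [Complex.ofReal_sub, Complex.ofReal_add, Complex.ofReal_mul, Complex.ofReal_ofNat,
    mul_sub, mul_add, mul_left_comm (cexp _)]
  rw [integral_sub ?_ i9, integral_add ?_ i7, integral_sub i3 i5,
    integral_const_mul, integral_const_mul, integral_const_mul, integral_const_mul]
  · rfl
  · exact i3.sub i5
  · exact (i3.sub i5).add i7

lemma integral_exp_neg_I_mul_sech_combination (ξ : ℝ) :
    ∫ x : ℝ, cexp (-I * x * ξ) * ((240 * sech x ^ 3 - 3720 * sech x ^ 5 + 9960 * sech x ^ 7
        - 6720 * sech x ^ 9 : ℝ) : ℂ)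
      = (((π / 6) * (1 - ξ ^ 2) * ξ ^ 2 * (1 + ξ ^ 2) ^ 2 * sech (π * ξ / 2) : ℝ) : ℂ) := by
  have h3 := sechPowFourier_add_two one_ne_zero ξ
  have h5 := sechPowFourier_add_two three_ne_zero ξ
  have h7 := sechPowFourier_add_two (n := 5) (by norm_num) ξ
  have h9 := sechPowFourier_add_two (n := 7) (by norm_num) ξ
  norm_num at h3 h5 h7 h9
  rw [integral_exp_neg_I_mul_sech_combination_eq_sechPowFourier, h9, h7, h5, h3, sechPowFourier_one]
  push_cast
  ring

/-- Null structure (Lemma 1.6): the Fourier transform of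
`F₁ + F₂ = 240 sech³ − 3720 sech⁵ + 9960 sech⁷ − 6720 sech⁹` equals
`(π/6)(1 − ξ²) ξ² (1 + ξ²)² sech(π ξ/2)`; in particular it vanishes at `ξ = ±1`. -/
theorem null_structure_fourier_transform :
    (∀ ξ : ℝ,
      (∫ x : ℝ, Complex.exp (-(Complex.I) * (x : ℂ) * (ξ : ℂ))
          * ((240 * sech x ^ 3 - 3720 * sech x ^ 5 + 9960 * sech x ^ 7
              - 6720 * sech x ^ 9 : ℝ) : ℂ))
        = (((π / 6) * (1 - ξ ^ 2) * ξ ^ 2 * (1 + ξ ^ 2) ^ 2 * sech (π * ξ / 2) : ℝ) : ℂ)) ∧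
    (∫ x : ℝ, Complex.exp (-(Complex.I) * (x : ℂ) * ((1 : ℝ) : ℂ))
        * ((240 * sech x ^ 3 - 3720 * sech x ^ 5 + 9960 * sech x ^ 7
            - 6720 * sech x ^ 9 : ℝ) : ℂ)) = 0 ∧
    (∫ x : ℝ, Complex.exp (-(Complex.I) * (x : ℂ) * ((-1 : ℝ) : ℂ))
        * ((240 * sech x ^ 3 - 3720 * sech x ^ 5 + 9960 * sech x ^ 7
            - 6720 * sech x ^ 9 : ℝ) : ℂ)) = 0 := by
  refine ⟨integral_exp_neg_I_mul_sech_combination, ?_, ?_⟩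
  · rw [integral_exp_neg_I_mul_sech_combination]; norm_num
  · rw [integral_exp_neg_I_mul_sech_combination]; norm_num
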